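/- arXiv:1307.7803 — 5 statements merged into one kernel-verified Lean document; each statement's English description precedes it below -/
import Mathlib

section
/- Let f be a valid labeling for an MKL instance, let i be a label, and let e=(u,v) ∈ E_i(f) be an edge whose tail u is not reachable from the anchor a by a directed path in the subgraph induced by E_i(f). Then the labeling f' obtained from f by removing label i from e (i.e., f'(e)=f(e)∖{i} and f'(e')=f(e') for all e' ≠ e) is also valid, and its cost is at most the cost of f; moreover if α > 0 its cost is strictly smaller. -/
open Finset

/-- There is a directed path from `a` to `t` all of whose edges lie in `F`. -/
def ReachIn {V : Type*} (F : Set (V × V)) (a t : V) : Prop :=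
  Relation.ReflTransGen (fun u v => (u, v) ∈ F) a t

/-- `E_i(f)`: the set of edges of `E` carrying label `i` under the labeling `f`. -/
def EdgesWith {V : Type*} {k : ℕ} (E : Finset (V × V))
    (f : V × V → Finset (Fin k)) (i : Fin k) : Set (V × V) :=
  {e | e ∈ E ∧ i ∈ f e}

/-- `f` is a valid labeling: for every label `i` and every terminal `t ∈ T i`
there is a directed path from the anchor `a` to `t` all of whose edges lie in `E_i(f)`. -/
def ValidLabeling {V : Type*} {k : ℕ} (E : Finset (V × V)) (a : V)
    (T : Fin k → Finset V) (f : V × V → Finset (Fin k)) : Prop :=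
  ∀ i : Fin k, ∀ t ∈ T i, ReachIn (EdgesWith E f i) a t

/-- `L(f) = ∑_{e ∈ E} |f(e)|`. -/
def labelCount {V : Type*} {k : ℕ} (E : Finset (V × V))
    (f : V × V → Finset (Fin k)) : ℕ :=
  ∑ e ∈ E, (f e).card

/-- `N(f) = |{e ∈ E : f(e) ≠ ∅}|`. -/
def edgeCount {V : Type*} {k : ℕ} (E : Finset (V × V))
    (f : V × V → Finset (Fin k)) : ℕ :=
  (E.filter fun e => f e ≠ ∅).card

/-- The cost `α·L(f) + (1-α)·N(f)` of a labeling. -/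
def labelingCost {V : Type*} {k : ℕ} (α : ℝ) (E : Finset (V × V))
    (f : V × V → Finset (Fin k)) : ℝ :=
  α * labelCount E f + (1 - α) * edgeCount E f

/-! An edge `(u, v)` whose tail is unreachable from `a` in `E_i(f)` lies on no
path from `a` in `E_i(f)`, so removing label `i` from it destroys none of the paths that witness
validity. It lowers `L(f)` by exactly one and cannot raise `N(f)`, so the cost drops by at
least `α`. -/

theorem ReachIn.diff_singleton {V : Type*} {F : Set (V × V)} {a t : V} {e : V × V}
    (hu : ¬ ReachIn F a e.1) (ht : ReachIn F a t) : ReachIn (F \ {e}) a t := by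
  induction ht with
  | refl => exact Relation.ReflTransGen.refl
  | @tail b c hab hbc ih =>
    refine ih.tail ⟨hbc, fun hbce => hu ?_⟩
    rw [Set.mem_singleton_iff] at hbce
    exact hbce ▸ hab

theorem edgeCount_mono {V : Type*} {k : ℕ} {E : Finset (V × V)}
    {f g : V × V → Finset (Fin k)} (hgf : ∀ x, g x ⊆ f x) :
    edgeCount E g ≤ edgeCount E f :=
  card_le_card <| monotone_filter_right E fun x _ hgx =>
    nonempty_iff_ne_empty.1 ((nonempty_iff_ne_empty.2 hgx).mono (hgf x))

section RemoveLabel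

variable {V : Type*} [DecidableEq V] {k : ℕ} (E : Finset (V × V)) (f : V × V → Finset (Fin k))

def removeLabel (e : V × V) (i : Fin k) : V × V → Finset (Fin k) :=
  Function.update f e (f e \ {i})

variable {E f}

theorem edgesWith_removeLabel_self (e : V × V) (i : Fin k) :
    EdgesWith E (removeLabel f e i) i = EdgesWith E f i \ {e} := by
  ext x
  by_cases hx : x = e
  · subst hx
    simp [EdgesWith, removeLabel]
  · simp [EdgesWith, removeLabel, hx]

theorem edgesWith_removeLabel_of_ne (e : V × V) {i j : Fin k} (hji : j ≠ i) :
    EdgesWith E (removeLabel f e i) j = EdgesWith E f j := by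
  ext x
  by_cases hx : x = e
  · subst hx
    simp [EdgesWith, removeLabel, hji]
  · simp [EdgesWith, removeLabel, hx]

theorem ValidLabeling.removeLabel {a : V} {T : Fin k → Finset V} (hf : ValidLabeling E a T f)
    {i : Fin k} {e : V × V} (hu : ¬ ReachIn (EdgesWith E f i) a e.1) :
    ValidLabeling E a T (removeLabel f e i) := by
  intro j t ht
  by_cases hji : j = i
  · subst hji
    rw [edgesWith_removeLabel_self]
    exact (hf j t ht).diff_singleton hu
  · rw [edgesWith_removeLabel_of_ne e hji]
    exact hf j t ht

theorem labelCount_update_add {e : V × V} (he : e ∈ E) (s : Finset (Fin k)) :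
    labelCount E (Function.update f e s) + (f e).card = labelCount E f + s.card := by
  unfold labelCount
  rw [← add_sum_erase E _ he, ← add_sum_erase E (fun x => (f x).card) he,
    Function.update_self]
  have hrest : ∑ x ∈ E.erase e, (Function.update f e s x).card = ∑ x ∈ E.erase e, (f x).card :=
    sum_congr rfl fun x hx => by rw [Function.update_of_ne (ne_of_mem_erase hx)]
  omega

theorem labelCount_removeLabel_add_one {i : Fin k} {e : V × V} (he : e ∈ EdgesWith E f i) :
    labelCount E (removeLabel f e i) + 1 = labelCount E f := by
  have hcard : (f e \ {i}).card + 1 = (f e).card := by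
    rw [sdiff_singleton_eq_erase, card_erase_add_one he.2]
  have := labelCount_update_add (f := f) he.1 (f e \ {i})
  unfold removeLabel
  omega

theorem removeLabel_subset (e : V × V) (i : Fin k) (x : V × V) : removeLabel f e i x ⊆ f x := by
  by_cases hx : x = e
  · subst hx
    simp [removeLabel]
  · simp [removeLabel, hx]

theorem labelingCost_removeLabel_le_sub {α : ℝ} (hα1 : α ≤ 1) {i : Fin k} {e : V × V}
    (he : e ∈ EdgesWith E f i) :
    labelingCost α E (removeLabel f e i) ≤ labelingCost α E f - α := by
  have hL : (labelCount E (removeLabel f e i) : ℝ) + 1 = labelCount E f := by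
    exact_mod_cast labelCount_removeLabel_add_one he
  have hN : (edgeCount E (removeLabel f e i) : ℝ) ≤ edgeCount E f := by
    exact_mod_cast edgeCount_mono (removeLabel_subset e i)
  unfold labelingCost
  nlinarith

end RemoveLabel

theorem mkl_remove_label_on_unreachable_edge_general {V : Type*} [DecidableEq V]
    {k : ℕ} (E : Finset (V × V)) (a : V) (T : Fin k → Finset V)
    (f : V × V → Finset (Fin k)) (hvalid : ValidLabeling E a T f)
    (i : Fin k) (e : V × V) (he : e ∈ EdgesWith E f i)
    (hu : ¬ ReachIn (EdgesWith E f i) a e.1)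
    (α : ℝ) (hα0 : 0 ≤ α) (hα1 : α ≤ 1) :
    ValidLabeling E a T (Function.update f e (f e \ {i})) ∧
    labelingCost α E (Function.update f e (f e \ {i})) ≤ labelingCost α E f ∧
    (0 < α → labelingCost α E (Function.update f e (f e \ {i})) < labelingCost α E f) := by
  have hcost : labelingCost α E (Function.update f e (f e \ {i})) ≤ labelingCost α E f - α :=
    labelingCost_removeLabel_le_sub hα1 he
  exact ⟨hvalid.removeLabel hu, by linarith, fun hα => by linarith⟩

/-- Let `f` be a valid labeling, `i` a label, and `e = (u,v) ∈ E_i(f)`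
an edge whose tail `u` is not reachable from the anchor `a` in the subgraph induced by
`E_i(f)`. Then the labeling `f'` obtained from `f` by removing label `i` from `e` is
also valid, its cost is at most the cost of `f`, and if `α > 0` its cost is strictly
smaller. -/
theorem mkl_remove_label_on_unreachable_edge {V : Type*} [Fintype V] [DecidableEq V]
    {k : ℕ} (E : Finset (V × V)) (a : V) (T : Fin k → Finset V) (hTa : ∀ i, a ∉ T i)
    (f : V × V → Finset (Fin k)) (hvalid : ValidLabeling E a T f)
    (i : Fin k) (e : V × V) (he : e ∈ EdgesWith E f i)
    (hu : ¬ ReachIn (EdgesWith E f i) a e.1)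
    (α : ℝ) (hα0 : 0 ≤ α) (hα1 : α ≤ 1) :
    ValidLabeling E a T (Function.update f e (f e \ {i})) ∧
    labelingCost α E (Function.update f e (f e \ {i})) ≤ labelingCost α E f ∧
    (0 < α → labelingCost α E (Function.update f e (f e \ {i})) < labelingCost α E f) :=
  mkl_remove_label_on_unreachable_edge_general E a T f hvalid i e he hu α hα0 hα1
end

section
/- Let f be a valid labeling of minimum cost (for a fixed 0 < α ≤ 1) for an MKL instance, and fix a label i. Suppose every vertex incident to an edge of E_i(f) is reachable from the anchor a in the subgraph G_i induced by E_i(f), and that no edge of E_i(f) is directed into a. If the underlying undirected graph of G_i contained a cycle v_1,…,v_n, then choosing v_1 to be a cycle vertex of maximum directed distance from a in G_i, removing label i from one of the two cycle edges incident to v_1 (the one oriented into v_1 that is not needed to reach v_1) would yield a valid labeling of strictly smaller cost — contradicting minimality. Hence the underlying undirected graph of G_i is acyclic. -/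
open Finset

/-- The underlying undirected (simple) graph of a set of directed edges. -/
def undirGraph {V : Type*} (F : Set (V × V)) : SimpleGraph V where
  Adj u v := u ≠ v ∧ ((u, v) ∈ F ∨ (v, u) ∈ F)
  symm := ⟨fun u v h => ⟨h.1.symm, h.2.symm⟩⟩
  loopless := ⟨fun v h => h.1 rfl⟩

/-- The underlying undirected multigraph of a set of directed edges contains no cycle:
no self-loops, no pair of anti-parallel edges (an undirected 2-cycle), and the
underlying simple graph is acyclic. -/
def UndirectedAcyclic {V : Type*} (F : Set (V × V)) : Prop :=
  (∀ u, (u, u) ∉ F) ∧ (∀ u v, (u, v) ∈ F → (v, u) ∉ F) ∧ (undirGraph F).IsAcyclic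

/-!
Erasing label `i` from an `i`-edge whose head is still reachable through the other `i`-edges
keeps the labeling valid and lowers its cost by `α > 0`; so in a minimum-cost labeling no such
edge exists. Of two `i`-edges into `v`, one is not the last edge of a path from `a` that
enters `v` only at its end, and is such an edge; so every vertex has in-degree at most one
in `G_i`. Consequently the distance from `a`
strictly increases along the edges of `G_i`, and on an undirected cycle the vertex of maximum
distance would have two distinct in-neighbours.
-/

theorem SimpleGraph.isAcyclic_of_rank {V α : Type*} [LinearOrder α] {G : SimpleGraph V}
    (d : V → α) (hne : ∀ ⦃u v⦄, G.Adj u v → d u ≠ d v)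
    (hparent : ∀ ⦃u u' v⦄, G.Adj u v → G.Adj u' v → d u < d v → d u' < d v → u = u') :
    G.IsAcyclic := by
  classical
  intro v c hc
  obtain ⟨m, hm, hmax⟩ := Set.exists_max_image {x | x ∈ c.support} d c.support.finite_toSet
    ⟨v, c.start_mem_support⟩
  have hc' := hc.rotate hm
  set c' := c.rotate m hm
  have hlt : ∀ x ∈ c'.support, G.Adj x m → d x < d m := fun x hx hadj =>
    lt_of_le_of_ne (hmax x ((c.mem_support_rotate_iff m hm).1 hx)) (hne hadj)
  apply hc'.snd_ne_penultimate
  exact hparent (c'.adj_snd hc'.not_nil).symm (c'.adj_penultimate hc'.not_nil)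
    (hlt _ (c'.getVert_mem_support 1) (c'.adj_snd hc'.not_nil).symm)
    (hlt _ (c'.getVert_mem_support _) (c'.adj_penultimate hc'.not_nil))

section Reachability

variable {V : Type*} {F : Set (V × V)} {a v : V}

theorem undirectedAcyclic_of_rank {α : Type*} [LinearOrder α] (d : V → α)
    (hd : ∀ ⦃u v⦄, (u, v) ∈ F → d u < d v)
    (hin : ∀ ⦃u u' v⦄, (u, v) ∈ F → (u', v) ∈ F → u = u') :
    UndirectedAcyclic F := by
  have head_of_lt : ∀ ⦃u v⦄, (undirGraph F).Adj u v → d u < d v → (u, v) ∈ F :=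
    fun u v huv hlt => huv.2.resolve_right fun hvu => (hd hvu).not_gt hlt
  refine ⟨fun u huu => (hd huu).false, fun u v huv hvu => (hd huv).not_gt (hd hvu), ?_⟩
  refine SimpleGraph.isAcyclic_of_rank d ?_ ?_
  · rintro u v ⟨-, huv | hvu⟩
    exacts [(hd huv).ne, (hd hvu).ne']
  · exact fun u u' v huv hu'v hlt hlt' => hin (head_of_lt huv hlt) (head_of_lt hu'v hlt')

theorem ReachIn.mono {F' : Set (V × V)} (hFF' : F ⊆ F') (h : ReachIn F a v) :
    ReachIn F' a v :=
  Relation.ReflTransGen.mono (fun _ _ huv => hFF' huv) _ _ h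

theorem ReachIn.exists_last_edge (h : ReachIn F a v) (hva : v ≠ a) :
    ∃ w, ReachIn {e ∈ F | e.2 ≠ v} a w ∧ (w, v) ∈ F := by
  suffices ∀ t, ReachIn F a t →
      ReachIn {e ∈ F | e.2 ≠ v} a t ∨ ∃ w, ReachIn {e ∈ F | e.2 ≠ v} a w ∧ (w, v) ∈ F by
    refine (this v h).resolve_left fun h' => ?_
    rcases Relation.ReflTransGen.cases_tail h' with hav | ⟨b, -, hbv⟩
    exacts [hva hav, hbv.2 rfl]
  intro t ht
  induction ht with
  | refl => exact .inl .refl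
  | @tail b c _ hbc ih =>
    refine ih.elim (fun hb => ?_) .inr
    by_cases hcv : c = v
    · exact .inr ⟨b, hb, hcv ▸ hbc⟩
    · exact .inl (.tail hb ⟨hbc, hcv⟩)

theorem ReachIn.sdiff_singleton {e : V × V} (he : ReachIn (F \ {e}) a e.2) {t : V}
    (h : ReachIn F a t) : ReachIn (F \ {e}) a t := by
  induction h with
  | refl => exact .refl
  | @tail b c _ hbc ih =>
    by_cases hbce : (b, c) = e
    · exact hbce ▸ he
    · exact .tail ih ⟨hbc, hbce⟩

theorem exists_redundant_edge_of_ne {u u' : V} (hv : ReachIn F a v) (hva : v ≠ a)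
    (hu : (u, v) ∈ F) (hu' : (u', v) ∈ F) (huu' : u ≠ u') :
    ∃ x, (x, v) ∈ F ∧ ReachIn (F \ {(x, v)}) a v := by
  obtain ⟨w, hw, hwv⟩ := hv.exists_last_edge hva
  obtain ⟨x, hx, hxw⟩ : ∃ x, (x, v) ∈ F ∧ x ≠ w := by
    by_cases huw : u = w
    · exact ⟨u', hu', fun h => huu' (huw.trans h.symm)⟩
    · exact ⟨u, hu, huw⟩
  have hsub : {e ∈ F | e.2 ≠ v} ⊆ F \ {(x, v)} :=
    fun e he => ⟨he.1, fun hex => he.2 (congrArg Prod.snd hex)⟩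
  exact ⟨x, hx, .tail (hw.mono hsub) ⟨hwv, fun hwx => hxw (congrArg Prod.fst hwx).symm⟩⟩

def ReachInSteps (F : Set (V × V)) : ℕ → V → V → Prop
  | 0 => Eq
  | n + 1 => fun u v => ∃ w, ReachInSteps F n u w ∧ (w, v) ∈ F

theorem ReachIn.exists_reachInSteps (h : ReachIn F a v) : ∃ n, ReachInSteps F n a v := by
  induction h with
  | refl => exact ⟨0, rfl⟩
  | tail _ hbc ih =>
    obtain ⟨n, hn⟩ := ih
    exact ⟨n + 1, _, hn, hbc⟩

/-- The length of a shortest path from `a` to `v` (junk value `0` if `v` is unreachable). -/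
noncomputable def reachDist (F : Set (V × V)) (a v : V) : ℕ :=
  sInf {n | ReachInSteps F n a v}

theorem reachDist_lt_of_mem {u : V} (hin : ∀ ⦃u u' v⦄, (u, v) ∈ F → (u', v) ∈ F → u = u')
    (huv : (u, v) ∈ F) (hv : ReachIn F a v) (hva : v ≠ a) :
    reachDist F a u < reachDist F a v := by
  have hshortest : ReachInSteps F (reachDist F a v) a v := Nat.sInf_mem hv.exists_reachInSteps
  cases hn : reachDist F a v with
  | zero => rw [hn] at hshortest; exact absurd hshortest.symm hva
  | succ n =>
    rw [hn] at hshortest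
    obtain ⟨w, hw, hwv⟩ := hshortest
    rw [hin hwv huv] at hw
    exact Nat.lt_succ_of_le (Nat.sInf_le hw)

end Reachability

section Labeling

variable {V : Type*} [DecidableEq V] {k : ℕ} {E : Finset (V × V)} {f : V × V → Finset (Fin k)}
  {i : Fin k} {e₀ : V × V}

theorem edgesWith_update_erase_self :
    EdgesWith E (Function.update f e₀ ((f e₀).erase i)) i = EdgesWith E f i \ {e₀} := by
  ext e
  by_cases he : e = e₀
  · subst he; simp [EdgesWith]
  · simp [EdgesWith, he]

theorem edgesWith_update_erase_of_ne {j : Fin k} (hji : j ≠ i) :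
    EdgesWith E (Function.update f e₀ ((f e₀).erase i)) j = EdgesWith E f j := by
  ext e
  by_cases he : e = e₀
  · subst he; simp [EdgesWith, hji]
  · simp [EdgesWith, he]

theorem labelCount_update_erase (he₀ : e₀ ∈ EdgesWith E f i) :
    labelCount E (Function.update f e₀ ((f e₀).erase i)) + 1 = labelCount E f := by
  unfold labelCount
  rw [← Finset.add_sum_erase E _ he₀.1, ← Finset.add_sum_erase E (fun e => (f e).card) he₀.1,
    Finset.sum_congr rfl fun e he => by rw [Function.update_of_ne (Finset.ne_of_mem_erase he)],
    Function.update_self, Finset.card_erase_of_mem he₀.2]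
  have := Finset.card_pos.2 ⟨i, he₀.2⟩
  omega

theorem edgeCount_update_erase_le (he₀ : e₀ ∈ EdgesWith E f i) :
    edgeCount E (Function.update f e₀ ((f e₀).erase i)) ≤ edgeCount E f := by
  refine Finset.card_le_card fun e he => ?_
  simp only [Finset.mem_filter] at he ⊢
  refine ⟨he.1, ?_⟩
  by_cases hee₀ : e = e₀
  · exact hee₀ ▸ Finset.ne_empty_of_mem he₀.2
  · simpa [hee₀] using he.2

theorem labelingCost_update_erase_lt {α : ℝ} (hα0 : 0 < α) (hα1 : α ≤ 1)
    (he₀ : e₀ ∈ EdgesWith E f i) :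
    labelingCost α E (Function.update f e₀ ((f e₀).erase i)) < labelingCost α E f := by
  have hL : (labelCount E (Function.update f e₀ ((f e₀).erase i)) : ℝ) + 1 = labelCount E f := by
    exact_mod_cast labelCount_update_erase he₀
  have hN : (edgeCount E (Function.update f e₀ ((f e₀).erase i)) : ℝ) ≤ edgeCount E f := by
    exact_mod_cast edgeCount_update_erase_le he₀
  unfold labelingCost
  nlinarith

theorem ValidLabeling.update_erase {a : V} {T : Fin k → Finset V}
    (hvalid : ValidLabeling E a T f)
    (hred : ∀ t, ReachIn (EdgesWith E f i) a t → ReachIn (EdgesWith E f i \ {e₀}) a t) :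
    ValidLabeling E a T (Function.update f e₀ ((f e₀).erase i)) := by
  intro j t ht
  by_cases hji : j = i
  · subst hji
    rw [edgesWith_update_erase_self]
    exact hred t (hvalid j t ht)
  · rw [edgesWith_update_erase_of_ne hji]
    exact hvalid j t ht

/-- Otherwise erasing `i` from `e₀` would give a valid labeling that is cheaper by `α`. -/
theorem not_reachIn_sdiff_of_minimal {a : V} {T : Fin k → Finset V} {α : ℝ}
    (hα0 : 0 < α) (hα1 : α ≤ 1) (hvalid : ValidLabeling E a T f)
    (hmin : ∀ g : V × V → Finset (Fin k),
      ValidLabeling E a T g → labelingCost α E f ≤ labelingCost α E g)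
    (he₀ : e₀ ∈ EdgesWith E f i) :
    ¬ ReachIn (EdgesWith E f i \ {e₀}) a e₀.2 := fun he =>
  (hmin _ (hvalid.update_erase fun _ ht => he.sdiff_singleton ht)).not_gt
    (labelingCost_update_erase_lt hα0 hα1 he₀)

end Labeling

theorem mkl_min_cost_label_subgraph_acyclic_general {V : Type*} [DecidableEq V]
    {k : ℕ} (E : Finset (V × V)) (a : V) (T : Fin k → Finset V)
    (f : V × V → Finset (Fin k)) (α : ℝ) (hα0 : 0 < α) (hα1 : α ≤ 1)
    (hvalid : ValidLabeling E a T f)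
    (hmin : ∀ g : V × V → Finset (Fin k),
      ValidLabeling E a T g → labelingCost α E f ≤ labelingCost α E g)
    (i : Fin k)
    (hreach : ∀ e ∈ EdgesWith E f i,
      ReachIn (EdgesWith E f i) a e.1 ∧ ReachIn (EdgesWith E f i) a e.2)
    (hnoina : ∀ u : V, (u, a) ∉ EdgesWith E f i) :
    UndirectedAcyclic (EdgesWith E f i) := by
  have hne_anchor : ∀ ⦃u v⦄, (u, v) ∈ EdgesWith E f i → v ≠ a :=
    fun u _ huv hva => hnoina u (hva ▸ huv)
  have hin : ∀ ⦃u u' v⦄, (u, v) ∈ EdgesWith E f i → (u', v) ∈ EdgesWith E f i → u = u' := by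
    intro u u' v hu hu'
    by_contra huu'
    obtain ⟨x, hx, hbypass⟩ :=
      exists_redundant_edge_of_ne (hreach _ hu).2 (hne_anchor hu) hu hu' huu'
    exact not_reachIn_sdiff_of_minimal hα0 hα1 hvalid hmin hx hbypass
  exact undirectedAcyclic_of_rank (reachDist (EdgesWith E f i) a)
    (fun u v huv => reachDist_lt_of_mem hin huv (hreach _ huv).2 (hne_anchor huv)) hin

/-- Let `f` be a valid labeling of minimum cost (for a fixed
`0 < α ≤ 1`) and fix a label `i`. If every vertex incident to an edge of `E_i(f)` is
reachable from the anchor `a` in the subgraph `G_i` induced by `E_i(f)`, and no edge of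
`E_i(f)` is directed into `a`, then the underlying undirected graph of `G_i` is acyclic
(otherwise, removing label `i` from a suitable cycle edge oriented into a cycle vertex
of maximum distance from `a` would give a valid labeling of strictly smaller cost,
contradicting minimality). -/
theorem mkl_min_cost_label_subgraph_acyclic {V : Type*} [Fintype V] [DecidableEq V]
    {k : ℕ} (E : Finset (V × V)) (a : V) (T : Fin k → Finset V) (hTa : ∀ i, a ∉ T i)
    (f : V × V → Finset (Fin k)) (α : ℝ) (hα0 : 0 < α) (hα1 : α ≤ 1)
    (hvalid : ValidLabeling E a T f)
    (hmin : ∀ g : V × V → Finset (Fin k),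
      ValidLabeling E a T g → labelingCost α E f ≤ labelingCost α E g)
    (i : Fin k)
    (hreach : ∀ e ∈ EdgesWith E f i,
      ReachIn (EdgesWith E f i) a e.1 ∧ ReachIn (EdgesWith E f i) a e.2)
    (hnoina : ∀ u : V, (u, a) ∉ EdgesWith E f i) :
    UndirectedAcyclic (EdgesWith E f i) :=
  mkl_min_cost_label_subgraph_acyclic_general E a T f α hα0 hα1 hvalid hmin i hreach hnoina
end

section
/- Let g be a multi-set labeling of the edges of G satisfying the MKL flow constraints: (i) the multiset union of g over the out-edges of the anchor a assigns each label i exactly multiplicity |T_i|, and (ii) for every vertex v ≠ a, the multiset union of g over In(v) equals the multiset union of g over Out(v) together with one extra copy of each label i with v ∈ T_i. Define f(e) to be the underlying set of labels of g(e). Then f is a valid labeling; moreover L(f) ≤ L(g) and N(f) = N(g), so the cost of f is at most the cost of g for every 0 ≤ α ≤ 1. -/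
/-!
Fix a label `i` and let `A` be the set of vertices not reachable from the anchor along edges
carrying `i`. Summing the conservation law over `A` (which avoids the anchor), the flow of `i`
entering `A` equals the flow leaving `A` plus the number of `i`-terminals in `A`. No positive
`i`-flow enters `A` from outside, so the inflow is at most the outflow and `A` contains no
terminal. The counting claims hold edge by edge: a label of positive multiplicity counts once
in `f(e)` and at least once in `g(e)`.
-/

open Finset

/-- The MKL flow constraints for a multi-set labeling with multiplicities
`x e i` of label `i` on edge `e`: (i) the total multiplicity of each label `i` on the
out-edges of the anchor `a` is `|T i|`, and (ii) for every vertex `v ≠ a` and label `i`,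
the total multiplicity entering `v` equals the total multiplicity leaving `v`, plus `1`
if `v ∈ T i`. -/
def FlowConstraints {V : Type*} [DecidableEq V] {k : ℕ} (E : Finset (V × V)) (a : V)
    (T : Fin k → Finset V) (x : V × V → Fin k → ℕ) : Prop :=
  (∀ i : Fin k, ∑ e ∈ E.filter (fun e => e.1 = a), x e i = (T i).card) ∧
  (∀ v : V, v ≠ a → ∀ i : Fin k,
    ∑ e ∈ E.filter (fun e => e.2 = v), x e i
      = ∑ e ∈ E.filter (fun e => e.1 = v), x e i + (if v ∈ T i then 1 else 0))

/-- `L(g) = ∑_{e ∈ E} ∑_i x_e^i` for a multi-set labeling `g` with multiplicities `x`. -/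
def flowLabelCount {V : Type*} {k : ℕ} (E : Finset (V × V))
    (x : V × V → Fin k → ℕ) : ℕ :=
  ∑ e ∈ E, ∑ i : Fin k, x e i

/-- `N(g) = |{e ∈ E : g(e) nonempty}|` for a multi-set labeling `g` with
multiplicities `x`. -/
def flowEdgeCount {V : Type*} {k : ℕ} (E : Finset (V × V))
    (x : V × V → Fin k → ℕ) : ℕ :=
  (E.filter fun e => ∃ i : Fin k, 0 < x e i).card

def labelSupport {V : Type*} {k : ℕ} (x : V × V → Fin k → ℕ) (e : V × V) : Finset (Fin k) :=
  univ.filter fun i => 0 < x e i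

@[simp]
lemma mem_labelSupport {V : Type*} {k : ℕ} {x : V × V → Fin k → ℕ} {e : V × V} {i : Fin k} :
    i ∈ labelSupport x e ↔ 0 < x e i := by
  simp [labelSupport]

namespace FlowConstraints

variable {V : Type*} [DecidableEq V] {k : ℕ} {E : Finset (V × V)} {a : V}
  {T : Fin k → Finset V} {x : V × V → Fin k → ℕ}

lemma sum_into_eq_sum_out_add_card (hflow : FlowConstraints E a T x) (i : Fin k)
    {A : Finset V} (haA : a ∉ A) :
    ∑ e ∈ E.filter (fun e => e.2 ∈ A), x e i
      = ∑ e ∈ E.filter (fun e => e.1 ∈ A), x e i + #(A.filter (· ∈ T i)) := by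
  have hsum := sum_congr rfl fun v (hv : v ∈ A) =>
    hflow.2 v (ne_of_mem_of_not_mem hv haA) i
  rwa [sum_fiberwise_eq_sum_filter, sum_add_distrib, sum_fiberwise_eq_sum_filter,
    sum_boole, Nat.cast_id] at hsum

lemma notMem_of_closed (hflow : FlowConstraints E a T x) (i : Fin k) {A : Finset V}
    (haA : a ∉ A) (hclosed : ∀ e ∈ E, 0 < x e i → e.2 ∈ A → e.1 ∈ A) {t : V} (htA : t ∈ A) :
    t ∉ T i := by
  intro ht
  have hinto_le_out : ∑ e ∈ E.filter (fun e => e.2 ∈ A), x e i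
      ≤ ∑ e ∈ E.filter (fun e => e.1 ∈ A), x e i := by
    refine sum_le_sum_of_ne_zero fun e he hx => ?_
    rw [mem_filter] at he ⊢
    exact ⟨he.1, hclosed e he.1 (Nat.pos_of_ne_zero hx) he.2⟩
  have hcard : 0 < #(A.filter (· ∈ T i)) := card_pos.mpr ⟨t, mem_filter.mpr ⟨htA, ht⟩⟩
  have := hflow.sum_into_eq_sum_out_add_card i haA
  omega

theorem validLabeling [Fintype V] (hflow : FlowConstraints E a T x) :
    ValidLabeling E a T (labelSupport x) := by
  classical
  intro i t ht
  by_contra hunreach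
  let R : V → Prop := ReachIn (EdgesWith E (labelSupport x) i) a
  refine hflow.notMem_of_closed i (A := univ.filter fun v => ¬ R v) ?_ ?_
    (by simpa using hunreach) ht
  · simp only [mem_filter, mem_univ, true_and, not_not]
    exact Relation.ReflTransGen.refl
  · intro e he hx he2
    simp only [mem_filter, mem_univ, true_and] at he2 ⊢
    exact fun he1 => he2 (he1.tail ⟨he, mem_labelSupport.mpr hx⟩)

end FlowConstraints

lemma labelCount_labelSupport_le {V : Type*} {k : ℕ} (E : Finset (V × V))
    (x : V × V → Fin k → ℕ) : labelCount E (labelSupport x) ≤ flowLabelCount E x := by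
  refine sum_le_sum fun e _ => ?_
  rw [labelSupport, card_filter]
  exact sum_le_sum fun i _ => by split_ifs <;> omega

lemma edgeCount_labelSupport {V : Type*} {k : ℕ} (E : Finset (V × V))
    (x : V × V → Fin k → ℕ) : edgeCount E (labelSupport x) = flowEdgeCount E x := by
  simp only [edgeCount, flowEdgeCount, ← nonempty_iff_ne_empty, labelSupport,
    filter_nonempty_iff, mem_univ, true_and]

lemma labelingCost_le {V : Type*} {k : ℕ} {α : ℝ} (hα₀ : 0 ≤ α) (hα₁ : α ≤ 1)
    {E : Finset (V × V)} {f : V × V → Finset (Fin k)} {L N : ℕ}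
    (hL : labelCount E f ≤ L) (hN : edgeCount E f ≤ N) :
    labelingCost α E f ≤ α * L + (1 - α) * N := by
  unfold labelingCost
  gcongr

theorem mkl_flow_to_labeling_general {V : Type*} [Fintype V] [DecidableEq V] {k : ℕ}
    (E : Finset (V × V)) (a : V) (T : Fin k → Finset V)
    (x : V × V → Fin k → ℕ) (hflow : FlowConstraints E a T x) :
    ValidLabeling E a T (fun e => Finset.univ.filter fun i => 0 < x e i) ∧
    labelCount E (fun e => Finset.univ.filter fun i => 0 < x e i)
      ≤ flowLabelCount E x ∧
    edgeCount E (fun e => Finset.univ.filter fun i => 0 < x e i)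
      = flowEdgeCount E x ∧
    ∀ α : ℝ, 0 ≤ α → α ≤ 1 →
      labelingCost α E (fun e => Finset.univ.filter fun i => 0 < x e i)
        ≤ α * flowLabelCount E x + (1 - α) * flowEdgeCount E x :=
  ⟨hflow.validLabeling, labelCount_labelSupport_le E x, edgeCount_labelSupport E x,
    fun _ hα₀ hα₁ => labelingCost_le hα₀ hα₁ (labelCount_labelSupport_le E x)
      (edgeCount_labelSupport E x).le⟩

/-- Let `g` be a multi-set labeling (with multiplicities `x`)
satisfying the MKL flow constraints, and let `f(e)` be the underlying set of labels of
`g(e)`, i.e. the set of labels with positive multiplicity on `e`. Then `f` is a valid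
labeling; moreover `L(f) ≤ L(g)` and `N(f) = N(g)`, so the cost of `f` is at most the
cost of `g` for every `0 ≤ α ≤ 1`. -/
theorem mkl_flow_to_labeling {V : Type*} [Fintype V] [DecidableEq V] {k : ℕ}
    (E : Finset (V × V)) (a : V) (T : Fin k → Finset V) (hTa : ∀ i, a ∉ T i)
    (x : V × V → Fin k → ℕ) (hflow : FlowConstraints E a T x) :
    ValidLabeling E a T (fun e => Finset.univ.filter fun i => 0 < x e i) ∧
    labelCount E (fun e => Finset.univ.filter fun i => 0 < x e i)
      ≤ flowLabelCount E x ∧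
    edgeCount E (fun e => Finset.univ.filter fun i => 0 < x e i)
      = flowEdgeCount E x ∧
    ∀ α : ℝ, 0 ≤ α → α ≤ 1 →
      labelingCost α E (fun e => Finset.univ.filter fun i => 0 < x e i)
        ≤ α * flowLabelCount E x + (1 - α) * flowEdgeCount E x :=
  mkl_flow_to_labeling_general E a T x hflow
end

section
/- Let G_i be a finite directed tree rooted at a (every vertex of G_i is reachable from a by a unique directed path, a has no incoming edge in G_i, and the underlying undirected graph of G_i is acyclic), and let T_i be a set of vertices of G_i with a ∉ T_i. Define a flow x on the edges of G_i by setting x(u,v) equal to the number of vertices of T_i lying in the subtree of G_i rooted at v (including v itself). Then x satisfies the MKL flow constraints for label i: the total flow out of a equals |T_i|, and for every vertex v ≠ a, the flow into v equals the flow out of v plus 1 if v ∈ T_i (and plus 0 otherwise); moreover x(e) > 0 for every edge e of G_i whose head's subtree contains a terminal, so when every leaf subtree contains a terminal the support of x is all of G_i. -/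
/-!
Every edge of an undirected forest is a bridge. Hence there are no directed cycles, and two
edges `(u, v)`, `(u', v)` with `u`, `u'` reachable from the root would give a cycle through
the root, so every vertex `v ≠ a` of the tree has exactly one incoming edge. Consequently, if
`v ≠ t` and `t` lies below `v`, exactly one outgoing edge of `v` has `t` below its head.

Counting the flow terminal by terminal, each terminal `t` then contributes `1` to the flow out
of `a`, and at a vertex `v ≠ a` above `t` it contributes `1` to the inflow and `1` or `0` to
the outflow according as `v ≠ t` or `v = t`. For the support, follow edges from the head of
`e` to a sink, which exists because the tree is finite and has no directed cycle; the sink is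
a leaf, hence a terminal.
-/

open Finset

open scoped Classical in
/-- `x(u,v)`: the number of terminals of `Ti` lying in the subtree rooted at `v`,
i.e. the number of `t ∈ Ti` reachable from `v` by a directed path in `F`
(including `v` itself). -/
noncomputable def subtreeTerminalCount {V : Type*} (F : Finset (V × V))
    (Ti : Finset V) (e : V × V) : ℕ :=
  (Ti.filter fun t => ReachIn (↑F : Set (V × V)) e.2 t).card


section Tree

variable {V : Type*}

def AtMostOneInEdge (F : Set (V × V)) : Prop :=
  ∀ ⦃u u' v⦄, (u, v) ∈ F → (u', v) ∈ F → u = u'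

lemma exists_mem_snd_eq_of_reachIn {F : Set (V × V)} {e : V × V} {w : V} (he : e ∈ F)
    (h : ReachIn F e.2 w) : ∃ e' ∈ F, e'.2 = w := by
  rcases h.cases_tail with rfl | ⟨z, -, hzw⟩
  exacts [⟨e, he, rfl⟩, ⟨_, hzw, rfl⟩]

lemma reachIn_of_reachIn_of_forall_mem {F : Set (V × V)} {a v t : V}
    (hreach : ∀ e ∈ F, ReachIn F a e.1) (hat : ReachIn F a t) (hvt : ReachIn F v t) :
    ReachIn F a v := by
  rcases hvt.cases_head with rfl | ⟨w, hvw, -⟩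
  exacts [hat, hreach _ hvw]

lemma reachIn_total_of_reachIn {F : Set (V × V)} (hin : AtMostOneInEdge F) {t x y : V}
    (hx : ReachIn F x t) (hy : ReachIn F y t) : ReachIn F x y ∨ ReachIn F y x := by
  induction hx using Relation.ReflTransGen.head_induction_on with
  | refl => exact .inr hy
  | @head p q hpq _ ih =>
    rcases ih with h | h
    · exact .inl (.head hpq h)
    · rcases h.cases_tail with rfl | ⟨z, hyz, hzq⟩
      · exact .inl (.single hpq)
      · exact .inr (hin hzq hpq ▸ hyz)

namespace UndirectedAcyclic

variable {F : Set (V × V)} {u v : V}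

lemma reachable_deleteEdges_of_reachIn (hF : UndirectedAcyclic F) (huv : (u, v) ∈ F)
    {x y : V} (hy : y = u ∨ ¬ ReachIn F v y) (hxy : ReachIn F x y) :
    ((undirGraph F).deleteEdges {s(u, v)}).Reachable x y := by
  induction hxy using Relation.ReflTransGen.head_induction_on with
  | refl => rfl
  | @head p q hpq hqy ih =>
    by_cases he : (p, q) = (u, v)
    · obtain ⟨rfl, rfl⟩ := Prod.mk.inj he
      rcases hy with rfl | hvy
      exacts [.rfl, absurd hqy hvy]
    · refine SimpleGraph.Adj.reachable ?_ |>.trans ih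
      refine (SimpleGraph.deleteEdges_adj ..).mpr
        ⟨⟨fun h => hF.1 p (h ▸ hpq), .inl hpq⟩, ?_⟩
      rw [Set.mem_singleton_iff, Sym2.eq_iff]
      rintro (⟨rfl, rfl⟩ | ⟨rfl, rfl⟩)
      exacts [he rfl, hF.2.1 _ _ huv hpq]

lemma not_reachable_deleteEdges (hF : UndirectedAcyclic F) (huv : (u, v) ∈ F) :
    ¬ ((undirGraph F).deleteEdges {s(u, v)}).Reachable u v :=
  SimpleGraph.isAcyclic_iff_forall_adj_isBridge.mp hF.2.2
    ⟨fun h => hF.1 u (h ▸ huv), .inl huv⟩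

lemma not_reachIn_of_mem (hF : UndirectedAcyclic F) (huv : (u, v) ∈ F) : ¬ ReachIn F v u :=
  fun hvu => hF.not_reachable_deleteEdges huv
    (hF.reachable_deleteEdges_of_reachIn huv (.inl rfl) hvu).symm

lemma eq_of_reachIn_of_mem (hF : UndirectedAcyclic F) {a u' : V} (hu : ReachIn F a u)
    (hu' : ReachIn F a u') (huv : (u, v) ∈ F) (hu'v : (u', v) ∈ F) : u = u' := by
  by_contra hne
  have hau := hF.reachable_deleteEdges_of_reachIn huv (.inl rfl) hu
  have hau' := hF.reachable_deleteEdges_of_reachIn huv (.inr (hF.not_reachIn_of_mem hu'v)) hu'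
  have hu'v' : ((undirGraph F).deleteEdges {s(u, v)}).Adj u' v := by
    refine (SimpleGraph.deleteEdges_adj ..).mpr
      ⟨⟨fun h => hF.1 v (h ▸ hu'v), .inl hu'v⟩, ?_⟩
    rw [Set.mem_singleton_iff, Sym2.eq_iff]
    rintro (⟨rfl, -⟩ | ⟨rfl, -⟩)
    exacts [hne rfl, hF.1 _ hu'v]
  exact hF.not_reachable_deleteEdges huv (hau.symm.trans (hau'.trans hu'v'.reachable))

lemma eq_of_mem_of_reachIn (hF : UndirectedAcyclic F) (hin : AtMostOneInEdge F) {w w' t : V}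
    (hw : (v, w) ∈ F) (hw' : (v, w') ∈ F) (hwt : ReachIn F w t) (hw't : ReachIn F w' t) :
    w = w' := by
  have key : ∀ {b c : V}, (v, b) ∈ F → (v, c) ∈ F → ReachIn F b c → b = c := by
    intro b c hb hc hbc
    rcases hbc.cases_tail with rfl | ⟨z, hbz, hzc⟩
    · rfl
    · exact absurd (hin hzc hc ▸ hbz) (hF.not_reachIn_of_mem hb)
  rcases reachIn_total_of_reachIn hin hwt hw't with h | h
  exacts [key hw hw' h, (key hw' hw h).symm]

lemma exists_reachIn_forall_not_mem {F : Finset (V × V)}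
    (hF : UndirectedAcyclic (F : Set (V × V))) (v : V) :
    ∃ w, ReachIn F v w ∧ ∀ x, (w, x) ∉ F := by
  have hfin : {w | ReachIn F v w}.Finite := by
    refine ((F.finite_toSet.image Prod.snd).insert v).subset fun w hw => ?_
    rcases Relation.ReflTransGen.cases_tail hw with rfl | ⟨z, -, hzw⟩
    exacts [.inl rfl, .inr ⟨_, hzw, rfl⟩]
  -- `w` has a minimal set of descendants; an edge `(w, x)` would make `w` a descendant of `x`.
  obtain ⟨w, hvw, hmin⟩ :=
    hfin.exists_minimalFor (fun w => {x | ReachIn F w x}) _ ⟨v, .refl⟩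
  refine ⟨w, hvw, fun x hwx => hF.not_reachIn_of_mem hwx ?_⟩
  exact hmin (Relation.ReflTransGen.tail hvw hwx) (fun y hxy => .head hwx hxy) .refl

end UndirectedAcyclic

section Flow

open scoped Classical

lemma sum_subtreeTerminalCount (F : Finset (V × V)) (Ti : Finset V) (s : Finset (V × V)) :
    ∑ e ∈ s, subtreeTerminalCount F Ti e = ∑ t ∈ Ti, #(s.filter fun e => ReachIn F e.2 t) :=
  sum_card_bipartiteAbove_eq_sum_card_bipartiteBelow
    (r := fun (e : V × V) (t : V) => ReachIn F e.2 t)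

lemma subtreeTerminalCount_pos_iff {F : Finset (V × V)} {Ti : Finset V} {e : V × V} :
    0 < subtreeTerminalCount F Ti e ↔ ∃ t ∈ Ti, ReachIn F e.2 t := by
  simp only [subtreeTerminalCount, card_pos, filter_nonempty_iff]

variable [DecidableEq V] {F : Finset (V × V)} {a v t : V}

lemma card_filter_snd_eq_one (hin : AtMostOneInEdge (F : Set (V × V))) (hav : ReachIn F a v)
    (hva : v ≠ a) : #(F.filter fun e => e.2 = v) = 1 := by
  obtain ⟨z, -, hzv⟩ := hav.cases_tail.resolve_left hva
  refine card_eq_one.mpr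
    ⟨(z, v), eq_singleton_iff_unique_mem.mpr ⟨mem_filter.mpr ⟨hzv, rfl⟩, ?_⟩⟩
  rintro ⟨u, w⟩ hu
  simp only [mem_filter] at hu
  obtain ⟨hu, rfl⟩ := hu
  rw [hin hu hzv]

lemma card_filter_fst_filter_reachIn (hF : UndirectedAcyclic (F : Set (V × V)))
    (hin : AtMostOneInEdge (F : Set (V × V))) :
    #((F.filter fun e => e.1 = v).filter fun e => ReachIn F e.2 t)
      = if v ≠ t ∧ ReachIn F v t then 1 else 0 := by
  split_ifs with h
  · obtain ⟨w, hvw, hwt⟩ := h.2.cases_head.resolve_left h.1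
    refine card_eq_one.mpr ⟨(v, w), eq_singleton_iff_unique_mem.mpr ⟨?_, ?_⟩⟩
    · exact mem_filter.mpr ⟨mem_filter.mpr ⟨hvw, rfl⟩, hwt⟩
    rintro ⟨u, w'⟩ hw'
    simp only [mem_filter] at hw'
    obtain ⟨⟨hw', rfl⟩, hw't⟩ := hw'
    rw [hF.eq_of_mem_of_reachIn hin hw' hvw hw't hwt]
  · refine card_eq_zero.mpr (filter_eq_empty_iff.mpr ?_)
    rintro ⟨u, w⟩ hw hwt
    simp only [mem_filter] at hw
    obtain ⟨hw, rfl⟩ := hw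
    rcases eq_or_ne u t with rfl | hut
    · exact hF.not_reachIn_of_mem hw hwt
    · exact h ⟨hut, .head hw hwt⟩

lemma card_filter_snd_filter_reachIn_eq_add (hF : UndirectedAcyclic (F : Set (V × V)))
    (hin : AtMostOneInEdge (F : Set (V × V))) (hreach : ∀ e ∈ F, ReachIn F a e.1)
    (hat : ReachIn F a t) (hva : v ≠ a) :
    #((F.filter fun e => e.2 = v).filter fun e => ReachIn F e.2 t)
      = #((F.filter fun e => e.1 = v).filter fun e => ReachIn F e.2 t)
          + if t = v then 1 else 0 := by
  rw [card_filter_fst_filter_reachIn hF hin]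
  by_cases hvt : ReachIn F v t
  · have hav := reachIn_of_reachIn_of_forall_mem hreach hat hvt
    rw [filter_true_of_mem fun e he => (mem_filter.mp he).2 ▸ hvt,
      card_filter_snd_eq_one hin hav hva]
    by_cases htv : t = v <;> simp [htv, hvt, Ne.symm]
  · have htv : t ≠ v := fun h => hvt (h ▸ .refl)
    rw [filter_false_of_mem fun e he => (mem_filter.mp he).2 ▸ hvt, if_neg (hvt ·.2),
      if_neg htv, card_empty]

end Flow

end Tree

theorem tree_labeling_to_flow_general {V : Type*} [DecidableEq V]
    (F : Finset (V × V)) (a : V) (Ti : Finset V) (haT : a ∉ Ti)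
    (hreach : ∀ e ∈ F, ReachIn (↑F : Set (V × V)) a e.1 ∧ ReachIn (↑F : Set (V × V)) a e.2)
    (hacyc : UndirectedAcyclic (↑F : Set (V × V)))
    (hTvert : ∀ t ∈ Ti, ∃ e ∈ F, e.1 = t ∨ e.2 = t) :
    (∑ e ∈ F.filter (fun e => e.1 = a), subtreeTerminalCount F Ti e = Ti.card) ∧
    (∀ v : V, v ≠ a →
      ∑ e ∈ F.filter (fun e => e.2 = v), subtreeTerminalCount F Ti e
        = ∑ e ∈ F.filter (fun e => e.1 = v), subtreeTerminalCount F Ti e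
            + (if v ∈ Ti then 1 else 0)) ∧
    (∀ e ∈ F, (∃ t ∈ Ti, ReachIn (↑F : Set (V × V)) e.2 t)
      → 0 < subtreeTerminalCount F Ti e) ∧
    ((∀ v : V, (∃ e ∈ F, e.1 = v ∨ e.2 = v) → (∀ e ∈ F, e.1 ≠ v) → v ∈ Ti)
      → ∀ e ∈ F, 0 < subtreeTerminalCount F Ti e) := by
  have hin : AtMostOneInEdge (F : Set (V × V)) := fun _ _ _ h h' =>
    hacyc.eq_of_reachIn_of_mem (hreach _ h).1 (hreach _ h').1 h h'
  have hTreach : ∀ t ∈ Ti, ReachIn F a t := fun t ht => by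
    obtain ⟨e, he, rfl | rfl⟩ := hTvert t ht
    exacts [(hreach e he).1, (hreach e he).2]
  refine ⟨?_, fun v hva => ?_, fun e _ => subtreeTerminalCount_pos_iff.mpr,
    fun hleaf e he => ?_⟩
  · rw [sum_subtreeTerminalCount, card_eq_sum_ones]
    refine sum_congr rfl fun t ht => ?_
    rw [card_filter_fst_filter_reachIn hacyc hin,
      if_pos ⟨(ne_of_mem_of_not_mem ht haT).symm, hTreach t ht⟩]
  · rw [sum_subtreeTerminalCount, sum_subtreeTerminalCount, ← sum_ite_eq' Ti v (fun _ => 1),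
      ← sum_add_distrib]
    exact sum_congr rfl fun t ht => card_filter_snd_filter_reachIn_eq_add hacyc hin
      (fun e he => (hreach e he).1) (hTreach t ht) hva
  · obtain ⟨w, hw, hsink⟩ := hacyc.exists_reachIn_forall_not_mem e.2
    have hwTi : w ∈ Ti := hleaf w
      ((exists_mem_snd_eq_of_reachIn he hw).imp fun _ h => ⟨h.1, .inr h.2⟩)
      fun e' he' h => hsink e'.2 (h ▸ he')
    exact subtreeTerminalCount_pos_iff.mpr ⟨w, hwTi, hw⟩

/-- Let `F` be the edge set of a finite directed tree `G_i` rooted at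
`a` (every vertex of `G_i` is reachable from `a`, `a` has no incoming edge, and the
underlying undirected graph is acyclic), and let `Ti` be a set of vertices of `G_i`
with `a ∉ Ti`. Define the flow `x(u,v)` as the number of terminals of `Ti` in the
subtree rooted at `v`. Then `x` satisfies the MKL flow constraints for label `i`:
the total flow out of `a` is `|Ti|`, and at every `v ≠ a` the incoming flow equals the
outgoing flow plus `1` if `v ∈ Ti`; moreover `x(e) > 0` for every edge whose head's
subtree contains a terminal, so if every leaf's subtree contains a terminal then the
support of `x` is all of `G_i`. -/
theorem tree_labeling_to_flow {V : Type*} [Fintype V] [DecidableEq V]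
    (F : Finset (V × V)) (a : V) (Ti : Finset V) (haT : a ∉ Ti)
    (hreach : ∀ e ∈ F, ReachIn (↑F : Set (V × V)) a e.1 ∧ ReachIn (↑F : Set (V × V)) a e.2)
    (hnoina : ∀ u : V, (u, a) ∉ F)
    (hacyc : UndirectedAcyclic (↑F : Set (V × V)))
    (hTvert : ∀ t ∈ Ti, ∃ e ∈ F, e.1 = t ∨ e.2 = t) :
    (∑ e ∈ F.filter (fun e => e.1 = a), subtreeTerminalCount F Ti e = Ti.card) ∧
    (∀ v : V, v ≠ a →
      ∑ e ∈ F.filter (fun e => e.2 = v), subtreeTerminalCount F Ti e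
        = ∑ e ∈ F.filter (fun e => e.1 = v), subtreeTerminalCount F Ti e
            + (if v ∈ Ti then 1 else 0)) ∧
    (∀ e ∈ F, (∃ t ∈ Ti, ReachIn (↑F : Set (V × V)) e.2 t)
      → 0 < subtreeTerminalCount F Ti e) ∧
    ((∀ v : V, (∃ e ∈ F, e.1 = v ∨ e.2 = v) → (∀ e ∈ F, e.1 ≠ v) → v ∈ Ti)
      → ∀ e ∈ F, 0 < subtreeTerminalCount F Ti e) :=
  tree_labeling_to_flow_general F a Ti haT hreach hacyc hTvert
end

section
/- There exists an MKL instance with two labels (k=2), terminal sets T_1 and T_2, and α = 1/2, such that no valid labeling of minimum cost has all of its labeled edges contained in the union of the edge sets of a minimum directed Steiner tree for T_1 and a minimum directed Steiner tree for T_2; in particular, the optimal MKL solution for α=1/2 is in general neither the union of label-specific minimum Steiner trees nor a subgraph of that union. -/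
open Finset

/-- `F` is a minimum directed Steiner tree for terminal set `T` rooted at `a` in the
network `E`: an edge subset of `E` of minimum cardinality from which every terminal of
`T` is reachable from `a`. -/
def IsMinSteiner {V : Type*} (E : Finset (V × V)) (a : V) (T : Finset V)
    (F : Finset (V × V)) : Prop :=
  F ⊆ E ∧ (∀ t ∈ T, ReachIn (↑F : Set (V × V)) a t) ∧
  ∀ F' : Finset (V × V), F' ⊆ E → (∀ t ∈ T, ReachIn (↑F' : Set (V × V)) a t) →
    F.card ≤ F'.card

/-! The network has two direct paths with five edges from the anchor `0` to the terminals `5`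
and `10`, and a shared trunk with five edges from which one more edge enters each terminal.
Reaching a terminal forces either its whole direct path or the whole trunk detour (six edges),
so the minimum Steiner trees are exactly the direct paths. A labeling supported on their union
must therefore label all ten edges and costs at least `10` at `α = 1/2`, while putting both
labels on the trunk costs `(12 + 7) / 2 = 19 / 2`. -/

section Walks

variable {V : Type*} [DecidableEq V]

def walkEdges : List V → Finset (V × V)
  | u :: v :: l => insert (u, v) (walkEdges (v :: l))
  | _ => ∅

theorem walkEdges_append_pair (l : List V) (u v : V) :
    walkEdges (l ++ [u, v]) = insert (u, v) (walkEdges (l ++ [u])) := by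
  induction l with
  | nil => rfl
  | cons w l ih =>
    cases l with
    | nil => exact Finset.insert_comm _ _ _
    | cons w' l =>
      simp only [List.cons_append] at ih ⊢
      rw [walkEdges, ih, walkEdges, Finset.insert_comm]

def IsForcedWalk (E : Finset (V × V)) (a : V) (l : List V) : Prop :=
  ∀ e ∈ walkEdges l, e.2 ≠ a ∧ ∀ e' ∈ E, e'.2 = e.2 → e' = e

end Walks

namespace ReachIn

variable {V : Type*} {S : Set (V × V)} {a t : V}

theorem exists_pred (h : ReachIn S a t) (ht : t ≠ a) : ∃ u, ReachIn S a u ∧ (u, t) ∈ S :=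
  (Relation.ReflTransGen.cases_tail h).resolve_left ht

variable [DecidableEq V]

theorem of_walkEdges_subset {l : List V} (h : ↑(walkEdges (a :: l)) ⊆ S) :
    ∀ v ∈ l, ReachIn S a v := by
  induction l generalizing a with
  | nil => simp
  | cons u l ih =>
    rw [walkEdges, Finset.coe_insert, Set.insert_subset_iff] at h
    intro v hv
    rcases List.mem_cons.mp hv with rfl | hv
    · exact Relation.ReflTransGen.single h.1
    · exact Relation.ReflTransGen.head h.1 (ih h.2 v hv)

theorem walkEdges_subset {E : Finset (V × V)} (hS : S ⊆ ↑E) {l : List V} {v : V}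
    (hl : IsForcedWalk E a (l ++ [v])) (h : ReachIn S a v) : ↑(walkEdges (l ++ [v])) ⊆ S := by
  induction l using List.reverseRecOn generalizing v with
  | nil => simp [walkEdges]
  | append_singleton l u ih =>
    rw [List.append_assoc, List.singleton_append] at hl ⊢
    rw [IsForcedWalk, walkEdges_append_pair] at hl
    rw [walkEdges_append_pair]
    have ⟨hva, hpred⟩ := hl (u, v) (Finset.mem_insert_self _ _)
    obtain ⟨w, hw, hwv⟩ := exists_pred h hva
    obtain rfl : w = u := congrArg Prod.fst (hpred _ (hS hwv) rfl)
    rw [Finset.coe_insert, Set.insert_subset_iff]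
    exact ⟨hwv, ih (fun e he => hl e (Finset.mem_insert_of_mem he)) hw⟩

theorem walkEdges_subset_or {E : Finset (V × V)} (hS : S ⊆ ↑E) {p q : List V} {x y : V}
    (hp : IsForcedWalk E a (p ++ [x])) (hq : IsForcedWalk E a (q ++ [y])) (ht : t ≠ a)
    (hin : ∀ e ∈ E, e.2 = t → e.1 = x ∨ e.1 = y) (h : ReachIn S a t) :
    ↑(walkEdges (p ++ [x, t])) ⊆ S ∨ ↑(walkEdges (q ++ [y, t])) ⊆ S := by
  obtain ⟨w, hw, hwt⟩ := exists_pred h ht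
  simp only [walkEdges_append_pair, Finset.coe_insert, Set.insert_subset_iff]
  rcases hin _ (hS hwt) rfl with rfl | rfl
  · exact .inl ⟨hwt, walkEdges_subset hS hp hw⟩
  · exact .inr ⟨hwt, walkEdges_subset hS hq hw⟩

end ReachIn

theorem IsMinSteiner.eq_of_subset {V : Type*} {E : Finset (V × V)} {a : V} {T : Finset V}
    {F P : Finset (V × V)} (hF : IsMinSteiner E a T F) (hPE : P ⊆ E)
    (hP : ∀ t ∈ T, ReachIn (↑P : Set (V × V)) a t) (hPF : P ⊆ F) : F = P :=
  (Finset.eq_of_subset_of_card_le hPF (hF.2.2 P hPE hP)).symm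

section Cost

variable {V : Type*} {k : ℕ} (E : Finset (V × V)) (f : V × V → Finset (Fin k))

theorem edgeCount_le_labelCount : edgeCount E f ≤ labelCount E f := by
  rw [edgeCount, Finset.card_filter, labelCount]
  refine Finset.sum_le_sum fun e _ => ?_
  split_ifs with h
  · exact Finset.card_pos.mpr (Finset.nonempty_iff_ne_empty.mpr h)
  · exact Nat.zero_le _

theorem edgeCount_le_labelingCost {α : ℝ} (hα : 0 ≤ α) :
    (edgeCount E f : ℝ) ≤ labelingCost α E f := by
  have : (edgeCount E f : ℝ) ≤ labelCount E f := by exact_mod_cast edgeCount_le_labelCount E f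
  rw [labelingCost]
  nlinarith

end Cost

namespace MKLExample

def network : Finset (Fin 16 × Fin 16) :=
  {(0, 1), (1, 2), (2, 3), (3, 4), (4, 5),
   (0, 6), (6, 7), (7, 8), (8, 9), (9, 10),
   (0, 11), (11, 12), (12, 13), (13, 14), (14, 15), (15, 5), (15, 10)}

def target : Fin 2 → Fin 16 := ![5, 10]

def terminals (i : Fin 2) : Finset (Fin 16) := {target i}

def directPath : Fin 2 → Finset (Fin 16 × Fin 16) :=
  ![walkEdges [0, 1, 2, 3, 4, 5], walkEdges [0, 6, 7, 8, 9, 10]]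

def trunk : List (Fin 16) := [11, 12, 13, 14, 15]

def trunkPath (i : Fin 2) : Finset (Fin 16 × Fin 16) := walkEdges (0 :: trunk ++ [target i])

def trunkLabeling (e : Fin 16 × Fin 16) : Finset (Fin 2) := {i | e ∈ trunkPath i}

set_option maxRecDepth 4000 in
theorem directPath_subset_or_trunkPath_subset {S : Set (Fin 16 × Fin 16)} (hS : S ⊆ ↑network)
    (i : Fin 2) (h : ReachIn S 0 (target i)) : ↑(directPath i) ⊆ S ∨ ↑(trunkPath i) ⊆ S := by
  have htrunk : IsForcedWalk network 0 ([0, 11, 12, 13, 14] ++ [15]) := by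
    unfold IsForcedWalk; decide
  fin_cases i
  · exact ReachIn.walkEdges_subset_or (p := [0, 1, 2, 3]) (x := 4) hS
      (by unfold IsForcedWalk; decide) htrunk (by decide) (by decide) h
  · exact ReachIn.walkEdges_subset_or (p := [0, 6, 7, 8]) (x := 9) hS
      (by unfold IsForcedWalk; decide) htrunk (by decide) (by decide) h

theorem reachIn_directPath (i : Fin 2) : ∀ t ∈ terminals i, ReachIn (↑(directPath i)) 0 t := by
  fin_cases i <;> simp only [terminals, Finset.mem_singleton, forall_eq] <;>
    exact ReachIn.of_walkEdges_subset subset_rfl _ (by decide)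

theorem minSteiner_eq_directPath {i : Fin 2} {F : Finset (Fin 16 × Fin 16)}
    (hF : IsMinSteiner network 0 (terminals i) F) : F = directPath i := by
  have hdirect : directPath i ⊆ network := by fin_cases i <;> decide
  have hcard : F.card ≤ (directPath i).card := hF.2.2 _ hdirect (reachIn_directPath i)
  rcases directPath_subset_or_trunkPath_subset (fun e he => hF.1 he) i
      (hF.2.1 _ (Finset.mem_singleton_self _)) with h | h
  · exact IsMinSteiner.eq_of_subset hF hdirect (reachIn_directPath i) (Finset.coe_subset.mp h)
  · have := Finset.card_le_card (Finset.coe_subset.mp h)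
    have : (directPath i).card + 1 = (trunkPath i).card := by fin_cases i <;> decide
    omega

theorem trunkLabeling_valid : ValidLabeling network 0 terminals trunkLabeling := by
  intro i t ht
  rw [terminals, Finset.mem_singleton] at ht
  subst ht
  have hsub : ↑(trunkPath i) ⊆ EdgesWith network trunkLabeling i := fun e he =>
    ⟨(show trunkPath i ⊆ network by fin_cases i <;> decide) he, by simpa [trunkLabeling] using he⟩
  exact ReachIn.of_walkEdges_subset hsub (target i) (by simp)

theorem labelingCost_trunkLabeling : labelingCost (1 / 2) network trunkLabeling = 19 / 2 := by
  rw [labelingCost, show labelCount network trunkLabeling = 12 by decide,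
    show edgeCount network trunkLabeling = 7 by decide]
  norm_num

theorem directPath_subset_edgesWith {f : Fin 16 × Fin 16 → Finset (Fin 2)}
    (hf : ValidLabeling network 0 terminals f)
    (hsub : network.filter (fun e => f e ≠ ∅) ⊆ directPath 0 ∪ directPath 1) (i : Fin 2) :
    ↑(directPath i) ⊆ EdgesWith network f i := by
  refine (directPath_subset_or_trunkPath_subset (fun e he => he.1) i
    (hf i _ (Finset.mem_singleton_self _))).resolve_right fun h => ?_
  have h₀ : ((0, 11) : Fin 16 × Fin 16) ∈ EdgesWith network f i := h (by fin_cases i <;> decide)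
  have := hsub (Finset.mem_filter.mpr ⟨h₀.1, Finset.ne_empty_of_mem h₀.2⟩)
  exact absurd this (by decide)

end MKLExample

open MKLExample in
/-- There is an MKL instance with two labels and `α = 1/2` such that
no valid labeling of minimum cost has all of its labeled edges contained in the union
of (the edge sets of) a minimum directed Steiner tree for `T 0` and a minimum directed
Steiner tree for `T 1`: the optimal MKL solution is in general neither the union of
label-specific minimum Steiner trees nor a subgraph of that union. -/
theorem mkl_not_union_of_steiner_trees :
    ∃ (n : ℕ) (E : Finset (Fin n × Fin n)) (a : Fin n) (T : Fin 2 → Finset (Fin n)),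
      (∀ i, a ∉ T i) ∧
      (∃ f : Fin n × Fin n → Finset (Fin 2), ValidLabeling E a T f) ∧
      ∀ f : Fin n × Fin n → Finset (Fin 2), ValidLabeling E a T f →
        (∀ g : Fin n × Fin n → Finset (Fin 2), ValidLabeling E a T g →
          labelingCost (1/2) E f ≤ labelingCost (1/2) E g) →
        ∀ F₁ F₂ : Finset (Fin n × Fin n),
          IsMinSteiner E a (T 0) F₁ → IsMinSteiner E a (T 1) F₂ →
          ¬ (E.filter (fun e => f e ≠ ∅) ⊆ F₁ ∪ F₂) := by
  refine ⟨16, network, 0, terminals, by decide, ⟨trunkLabeling, trunkLabeling_valid⟩, ?_⟩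
  intro f hf hopt F₁ F₂ hF₁ hF₂ hsub
  rw [minSteiner_eq_directPath hF₁, minSteiner_eq_directPath hF₂] at hsub
  have hlabeled (i : Fin 2) : directPath i ⊆ network.filter (fun e => f e ≠ ∅) := fun e he =>
    have h := directPath_subset_edgesWith hf hsub i he
    Finset.mem_filter.mpr ⟨h.1, Finset.ne_empty_of_mem h.2⟩
  have hcost : (10 : ℝ) ≤ labelingCost (1 / 2) network f :=
    calc (10 : ℝ) = (directPath 0 ∪ directPath 1).card := by norm_cast
      _ ≤ edgeCount network f := by
        exact_mod_cast Finset.card_le_card (Finset.union_subset (hlabeled 0) (hlabeled 1))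
      _ ≤ _ := edgeCount_le_labelingCost network f (by norm_num)
  linarith [hopt trunkLabeling trunkLabeling_valid, labelingCost_trunkLabeling]
end
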